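/- arXiv:2205.09101 — 3 statements merged into one kernel-verified Lean document; each statement's English description precedes it below -/
import Mathlib

section
/- Let Ω ⊆ ℝⁿ be bounded open, E ⊆ Ω compact with |E| = 0, ϑ a positive weight on Ω, and let α, β, p be measurable functions on Ω with 0 ≤ α ≤ n, β ≥ 0, 1 < p⁻ ≤ p⁺ < ∞, and ess sup(pβ) ≤ n − ess sup α − p⁺ − 1. Suppose there is r₀ ∈ (0,1) with closure(E_{r₀}) ⊆ Ω and ∫_{E_r} r^{α(x)−n} ϑ(x) dx < ε for all r ∈ (0,r₀]. If u : Ω → [0,∞] satisfies u(x) ≤ C d(x,E)^{−β(x)} for a.e. x ∈ Ω∖E, then for all r ∈ (0,r₀], ∫_{E_r} u(x)^{p(x)} ϑ(x) dx ≤ C' ε r^{p⁺+1}, where C' depends only on C, p, β. -/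
/-!
Split `E_r \ E` into the dyadic annuli `K_j \ K_{j+1}`, `K_j = E_{2^{-j} r}`. On the `j`-th annulus
`d(·,E) ≥ 2^{-j-1} r`, so the growth bound gives `u^p ≤ max(C,1)^{p⁺} (2^{-j-1} r)^{-(pβ)⁺}`, while
the Minkowski bound at radius `2^{-j} r` gives `ϑ(K_j) ≤ (2^{-j} r)^{n-α⁺} ε`. The exponent
condition makes the product at most `const · ε · (2^{-j} r)^{p⁺+1}`, a geometric series in `j`.
-/

open MeasureTheory Set Metric Filter Topology

lemma sdiff_iInter_subset_iUnion_sdiff_succ {α : Type*} (K : ℕ → Set α) :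
    K 0 \ ⋂ j, K j ⊆ ⋃ j, K j \ K (j + 1) := by
  rintro x ⟨hx0, hx⟩
  by_contra h
  simp only [mem_iUnion, Set.mem_sdiff, not_exists, not_and, not_not] at h
  refine hx (mem_iInter.2 fun j => ?_)
  induction j with
  | zero => exact hx0
  | succ j ih => exact h j ih

lemma Real.rpow_le_max_one_rpow_mul_rpow_neg {u C d t β p pp B : ℝ} (hu : 0 ≤ u) (hC : 0 ≤ C)
    (ht : 0 < t) (ht1 : t ≤ 1) (htd : t ≤ d) (hβ : 0 ≤ β) (hp : 0 ≤ p) (hpp : p ≤ pp)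
    (hpβ : p * β ≤ B) (hud : u ≤ C * d ^ (-β)) :
    u ^ p ≤ max C 1 ^ pp * t ^ (-B) := by
  have hd : 0 < d := ht.trans_le htd
  have hCp : C ^ p ≤ max C 1 ^ pp :=
    (Real.rpow_le_rpow hC (le_max_left C 1) hp).trans
      (Real.rpow_le_rpow_of_exponent_le (le_max_right C 1) hpp)
  have hdt : d ^ (-(β * p)) ≤ t ^ (-B) := by
    calc d ^ (-(β * p)) ≤ t ^ (-(β * p)) := by
          rw [Real.rpow_neg hd.le, Real.rpow_neg ht.le]
          gcongr
      _ ≤ t ^ (-B) := Real.rpow_le_rpow_of_exponent_ge ht ht1 (by linarith)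
  calc u ^ p ≤ (C * d ^ (-β)) ^ p := Real.rpow_le_rpow hu hud hp
    _ = C ^ p * d ^ (-(β * p)) := by
        rw [Real.mul_rpow hC (Real.rpow_nonneg hd.le _), ← Real.rpow_mul hd.le, neg_mul]
    _ ≤ max C 1 ^ pp * t ^ (-B) := by gcongr

lemma ofReal_dyadic_rpow_le {M B a γ ε r : ℝ} (hM : 0 ≤ M) (hε : 0 ≤ ε) (hr0 : 0 < r)
    (hr1 : r ≤ 1) (hγ : γ ≤ a - B) (j : ℕ) :
    ENNReal.ofReal (M * ((2 : ℝ)⁻¹ ^ (j + 1) * r) ^ (-B)) *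
        (ENNReal.ofReal (((2 : ℝ)⁻¹ ^ j * r) ^ a) * ENNReal.ofReal ε) ≤
      ENNReal.ofReal (M * 2 ^ B * ε * r ^ γ * ((2 : ℝ)⁻¹ ^ γ) ^ j) := by
  set s := (2 : ℝ)⁻¹ ^ j * r with hs
  have hs0 : 0 < s := by positivity
  have hs1 : s ≤ 1 := mul_le_one₀ (pow_le_one₀ (by norm_num) (by norm_num)) hr0.le hr1
  have hhalf : ((2 : ℝ)⁻¹ ^ (j + 1) * r) ^ (-B) = 2 ^ B * s ^ (-B) := by
    rw [pow_succ', mul_assoc, Real.mul_rpow (by norm_num) hs0.le,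
      Real.inv_rpow (by norm_num), Real.rpow_neg (by norm_num), inv_inv]
  rw [← ENNReal.ofReal_mul (by positivity), ← ENNReal.ofReal_mul (by positivity)]
  refine ENNReal.ofReal_le_ofReal ?_
  calc M * ((2 : ℝ)⁻¹ ^ (j + 1) * r) ^ (-B) * (s ^ a * ε) = M * 2 ^ B * ε * s ^ (a - B) := by
        rw [hhalf, Real.rpow_sub hs0, Real.rpow_neg hs0.le]
        ring
    _ ≤ M * 2 ^ B * ε * s ^ γ :=
        mul_le_mul_of_nonneg_left (Real.rpow_le_rpow_of_exponent_ge hs0 hs1 hγ) (by positivity)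
    _ = M * 2 ^ B * ε * r ^ γ * ((2 : ℝ)⁻¹ ^ γ) ^ j := by
        rw [hs, Real.mul_rpow (by positivity) hr0.le, Real.rpow_pow_comm (by norm_num)]
        ring

lemma nonempty_of_setOf_infDist_lt_subset {V : Type*} [NormedAddCommGroup V] [NormedSpace ℝ V]
    [Nontrivial V] {E Ω : Set V} {r : ℝ} (hr : 0 < r) (hΩ : Bornology.IsBounded Ω)
    (h : {x | infDist x E < r} ⊆ Ω) : E.Nonempty := by
  rcases E.eq_empty_or_nonempty with rfl | hne
  · exact absurd (hΩ.subset fun x _ => h (by simpa using hr)) (NormedSpace.unbounded_univ ℝ V)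
  · exact hne

lemma iInter_setOf_infDist_lt_subset {X : Type*} [PseudoMetricSpace X] {E : Set X}
    (hE : IsClosed E) (hne : E.Nonempty) {s : ℕ → ℝ} (hs : Tendsto s atTop (𝓝 0)) :
    ⋂ j, {x | infDist x E < s j} ⊆ E := by
  intro x hx
  have h0 : infDist x E ≤ 0 :=
    ge_of_tendsto hs (Eventually.of_forall fun j => (mem_iInter.1 hx j).le)
  rw [← hE.closure_eq, mem_closure_iff_infDist_zero hne]
  exact le_antisymm h0 infDist_nonneg

section Lintegral

variable {X : Type*} [MeasurableSpace X] {μ : Measure X}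

lemma setLIntegral_le_of_ae_le_iUnion_geometric {S : Set X} {A : ℕ → Set X} {f : X → ENNReal}
    {a q : ℝ} (hS : S ≤ᵐ[μ] ⋃ j, A j) (ha : 0 ≤ a) (hq0 : 0 ≤ q) (hq1 : q < 1)
    (hA : ∀ j, ∫⁻ x in A j, f x ∂μ ≤ ENNReal.ofReal (a * q ^ j)) :
    ∫⁻ x in S, f x ∂μ ≤ ENNReal.ofReal (a * (1 - q)⁻¹) :=
  calc ∫⁻ x in S, f x ∂μ ≤ ∫⁻ x in ⋃ j, A j, f x ∂μ := lintegral_mono_set' hS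
    _ ≤ ∑' j, ∫⁻ x in A j, f x ∂μ := lintegral_iUnion_le _ _
    _ ≤ ∑' j, ENNReal.ofReal (a * q ^ j) := ENNReal.tsum_le_tsum hA
    _ = ENNReal.ofReal (∑' j, a * q ^ j) :=
        (ENNReal.ofReal_tsum_of_nonneg (fun j => by positivity)
          ((summable_geometric_of_lt_one hq0 hq1).mul_left a)).symm
    _ = ENNReal.ofReal (a * (1 - q)⁻¹) := by rw [tsum_mul_left, tsum_geometric_of_lt_one hq0 hq1]

lemma setLIntegral_ofReal_le_rpow_mul {S : Set X} {ϑ α : X → ℝ} {N αp s : ℝ} (hs0 : 0 < s)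
    (hs1 : s ≤ 1) (hϑ : ∀ᵐ x ∂μ.restrict S, 0 ≤ ϑ x) (hα : ∀ᵐ x ∂μ.restrict S, α x ≤ αp) :
    ∫⁻ x in S, ENNReal.ofReal (ϑ x) ∂μ ≤
      ENNReal.ofReal (s ^ (N - αp)) * ∫⁻ x in S, ENNReal.ofReal (s ^ (α x - N) * ϑ x) ∂μ := by
  rw [← lintegral_const_mul' _ _ ENNReal.ofReal_ne_top]
  refine lintegral_mono_ae ?_
  filter_upwards [hϑ, hα] with x hϑx hαx
  rw [← ENNReal.ofReal_mul (by positivity)]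
  refine ENNReal.ofReal_le_ofReal ?_
  have hone : 1 ≤ s ^ (α x - αp) :=
    Real.one_le_rpow_of_pos_of_le_one_of_nonpos hs0 hs1 (by linarith)
  calc ϑ x ≤ s ^ (α x - αp) * ϑ x := le_mul_of_one_le_left hϑx hone
    _ = s ^ (N - αp) * (s ^ (α x - N) * ϑ x) := by
        rw [← mul_assoc, ← Real.rpow_add hs0]
        ring_nf

end Lintegral

section Annuli

variable {X : Type*} [PseudoMetricSpace X] [MeasurableSpace X] {μ : Measure X} {E : Set X}

lemma setOf_infDist_lt_ae_le_iUnion_dyadic (hE : IsClosed E) (hne : E.Nonempty) (hE0 : μ E = 0)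
    (r : ℝ) :
    {x | infDist x E < r} ≤ᵐ[μ]
      ⋃ j : ℕ, {x | infDist x E < (2 : ℝ)⁻¹ ^ j * r} \
        {x | infDist x E < (2 : ℝ)⁻¹ ^ (j + 1) * r} := by
  have hlim : Tendsto (fun j : ℕ => (2 : ℝ)⁻¹ ^ j * r) atTop (𝓝 0) := by
    simpa using (tendsto_pow_atTop_nhds_zero_of_lt_one (r := (2 : ℝ)⁻¹) (by norm_num)
      (by norm_num)).mul_const r
  refine ae_le_set.2 (measure_mono_null (fun x ⟨hx, hxA⟩ => ?_) hE0)
  by_contra hxE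
  refine hxA (sdiff_iInter_subset_iUnion_sdiff_succ (fun j => {x | infDist x E < (2 : ℝ)⁻¹ ^ j * r})
    ⟨by simpa using hx, fun h => hxE (iInter_setOf_infDist_lt_subset hE hne hlim h)⟩)

lemma setLIntegral_annulus_le [OpensMeasurableSpace X] {S : Set X} {ϑ α β p u : X → ℝ}
    {N αp B pp C s t ε : ℝ} (ht : 0 < t) (hts : t ≤ s) (hs1 : s ≤ 1)
    (hKS : {x | infDist x E < s} ⊆ S) (hϑ : ∀ᵐ x ∂μ.restrict S, 0 ≤ ϑ x)
    (hα : ∀ᵐ x ∂μ.restrict S, α x ≤ αp) (hβ : ∀ x ∈ S, 0 ≤ β x)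
    (hp : ∀ᵐ x ∂μ.restrict S, 0 ≤ p x ∧ p x ≤ pp) (hpβ : ∀ᵐ x ∂μ.restrict S, p x * β x ≤ B)
    (hu : ∀ x, 0 ≤ u x) (hC : 0 ≤ C)
    (hgrowth : ∀ᵐ x ∂μ.restrict (S \ E), u x ≤ C * infDist x E ^ (-β x))
    (hMink : ∫⁻ x in {x | infDist x E < s}, ENNReal.ofReal (s ^ (α x - N) * ϑ x) ∂μ ≤
      ENNReal.ofReal ε) :
    ∫⁻ x in {x | infDist x E < s} \ {x | infDist x E < t}, ENNReal.ofReal (u x ^ p x * ϑ x) ∂μ ≤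
      ENNReal.ofReal (max C 1 ^ pp * t ^ (-B)) *
        (ENNReal.ofReal (s ^ (N - αp)) * ENNReal.ofReal ε) := by
  set A := {x | infDist x E < s} \ {x | infDist x E < t}
  have hmeas : ∀ ρ : ℝ, MeasurableSet {x | infDist x E < ρ} := fun ρ =>
    (isOpen_lt (continuous_infDist_pt E) continuous_const).measurableSet
  have hAS : A ⊆ S \ E := fun x hx =>
    ⟨hKS hx.1, fun hxE => hx.2 (by simpa [infDist_zero_of_mem hxE] using ht)⟩
  have hmass : ∫⁻ x in {x | infDist x E < s}, ENNReal.ofReal (ϑ x) ∂μ ≤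
      ENNReal.ofReal (s ^ (N - αp)) * ENNReal.ofReal ε :=
    (setLIntegral_ofReal_le_rpow_mul (ht.trans_le hts) hs1
      (ae_restrict_of_ae_restrict_of_subset hKS hϑ)
      (ae_restrict_of_ae_restrict_of_subset hKS hα)).trans (by gcongr)
  have hpoint : ∀ᵐ x ∂μ.restrict A, ENNReal.ofReal (u x ^ p x * ϑ x) ≤
      ENNReal.ofReal (max C 1 ^ pp * t ^ (-B)) * ENNReal.ofReal (ϑ x) := by
    filter_upwards [ae_restrict_of_ae_restrict_of_subset hAS hgrowth,
      ae_restrict_of_ae_restrict_of_subset (hAS.trans sdiff_subset) (hϑ.and (hp.and hpβ)),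
      ae_restrict_mem ((hmeas s).diff (hmeas t))] with x hux ⟨hϑx, hpx, hpβx⟩ hxA
    rw [← ENNReal.ofReal_mul (by positivity)]
    refine ENNReal.ofReal_le_ofReal (mul_le_mul_of_nonneg_right ?_ hϑx)
    exact Real.rpow_le_max_one_rpow_mul_rpow_neg (hu x) hC ht (hts.trans hs1) (not_lt.1 hxA.2)
      (hβ x (hAS hxA).1) hpx.1 hpx.2 hpβx hux
  calc ∫⁻ x in A, ENNReal.ofReal (u x ^ p x * ϑ x) ∂μ ≤
        ∫⁻ x in A, ENNReal.ofReal (max C 1 ^ pp * t ^ (-B)) * ENNReal.ofReal (ϑ x) ∂μ :=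
        lintegral_mono_ae hpoint
    _ = ENNReal.ofReal (max C 1 ^ pp * t ^ (-B)) * ∫⁻ x in A, ENNReal.ofReal (ϑ x) ∂μ :=
        lintegral_const_mul' _ _ ENNReal.ofReal_ne_top
    _ ≤ ENNReal.ofReal (max C 1 ^ pp * t ^ (-B)) *
        ∫⁻ x in {x | infDist x E < s}, ENNReal.ofReal (ϑ x) ∂μ := by
        gcongr; exact sdiff_subset
    _ ≤ _ := by gcongr

end Annuli

theorem stmt_6_general {n : ℕ} (Ω E : Set (Fin n → ℝ))
    (hΩb : Bornology.IsBounded Ω) (hE : IsCompact E)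
    (hEnull : volume E = 0)
    (ϑ α β p u : (Fin n → ℝ) → ℝ)
    (hϑpos : ∀ᵐ x ∂(volume.restrict Ω), 0 < ϑ x)
    (hunn : ∀ x, 0 ≤ u x)
    (hα : ∀ x ∈ Ω, 0 ≤ α x ∧ α x ≤ n) (hβ : ∀ x ∈ Ω, 0 ≤ β x)
    (pm pp αp pβp : ℝ) (hpm1 : 1 < pm) (hpmpp : pm ≤ pp)
    (hpb : ∀ᵐ x ∂(volume.restrict Ω), pm ≤ p x ∧ p x ≤ pp)
    (hαp : ∀ᵐ x ∂(volume.restrict Ω), α x ≤ αp)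
    (hpβ : ∀ᵐ x ∂(volume.restrict Ω), p x * β x ≤ pβp)
    -- exponent condition: ess sup (pβ) ≤ n − ess sup α − p⁺ − 1
    (hexp : pβp ≤ n - αp - pp - 1)
    (r₀ ε : ℝ) (hr₀ : r₀ ∈ Set.Ioo (0:ℝ) 1) (hε : 0 < ε)
    (hcl : closure {x | infDist x E < r₀} ⊆ Ω)
    (hMink : ∀ r ∈ Set.Ioc (0:ℝ) r₀,
      ∫⁻ x in {x | infDist x E < r}, ENNReal.ofReal (r ^ (α x - n) * ϑ x)
        < ENNReal.ofReal ε)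
    (C : ℝ) (hC : 0 < C)
    (hgrowth : ∀ᵐ x ∂(volume.restrict (Ω \ E)), u x ≤ C * infDist x E ^ (-(β x))) :
    ∃ C' > (0:ℝ), ∀ r ∈ Set.Ioc (0:ℝ) r₀,
      ∫⁻ x in {x | infDist x E < r}, ENNReal.ofReal (u x ^ p x * ϑ x)
        ≤ ENNReal.ofReal (C' * ε * r ^ (pp + 1)) := by
  obtain ⟨hr₀0, hr₀1⟩ := hr₀
  have hKΩ : ∀ r ≤ r₀, {x | infDist x E < r} ⊆ Ω := fun r hr x hx =>
    hcl (subset_closure (hx.trans_le hr))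
  by_cases hK0 : volume {x | infDist x E < r₀} = 0
  · refine ⟨1, one_pos, fun r hr => ?_⟩
    rw [Measure.restrict_eq_zero.2 (measure_mono_null (fun x hx => hx.trans_le hr.2) hK0),
      lintegral_zero_measure]
    exact zero_le
  -- At a point of `E_{r₀}` where the a.e. bounds hold, `n ≥ αp + pβp + pp + 1 > 2`; as `Ω` is
  -- bounded, `E_{r₀} ⊆ Ω` then forces `E ≠ ∅`.
  obtain ⟨x₀, hx₀, ⟨hpx₀, -⟩, hαx₀, hpβx₀⟩ := Measure.exists_mem_of_measure_ne_zero_of_ae hK0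
    (ae_restrict_of_ae_restrict_of_subset (hKΩ r₀ le_rfl) (hpb.and (hαp.and hpβ)))
  have hn : (0 : ℝ) < n := by
    nlinarith [(hα x₀ (hKΩ r₀ le_rfl hx₀)).1, hβ x₀ (hKΩ r₀ le_rfl hx₀)]
  have : Nonempty (Fin n) := ⟨⟨0, by exact_mod_cast hn⟩⟩
  have hEne := nonempty_of_setOf_infDist_lt_subset hr₀0 hΩb (hKΩ r₀ le_rfl)
  have hq1 : (2 : ℝ)⁻¹ ^ (pp + 1) < 1 := Real.rpow_lt_one (by norm_num) (by norm_num) (by linarith)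
  refine ⟨max C 1 ^ pp * 2 ^ pβp * (1 - (2 : ℝ)⁻¹ ^ (pp + 1))⁻¹,
    mul_pos (by positivity) (inv_pos.2 (sub_pos.2 hq1)), fun r ⟨hr0, hrr₀⟩ => ?_⟩
  refine (setLIntegral_le_of_ae_le_iUnion_geometric (a := max C 1 ^ pp * 2 ^ pβp * ε * r ^ (pp + 1))
    (setOf_infDist_lt_ae_le_iUnion_dyadic hE.isClosed hEne hEnull r) (by positivity)
    (by positivity) hq1 fun j => ?_).trans_eq (by ring_nf)
  have hs : (2 : ℝ)⁻¹ ^ j * r ≤ r₀ :=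
    (mul_le_of_le_one_left hr0.le (pow_le_one₀ (by norm_num) (by norm_num))).trans hrr₀
  have hts : (2 : ℝ)⁻¹ ^ (j + 1) * r ≤ (2 : ℝ)⁻¹ ^ j * r :=
    mul_le_mul_of_nonneg_right (pow_le_pow_of_le_one (by norm_num) (by norm_num) j.le_succ) hr0.le
  exact (setLIntegral_annulus_le (by positivity) hts (hs.trans hr₀1.le) (hKΩ _ hs)
      (hϑpos.mono fun x hx => hx.le) hαp hβ (hpb.mono fun x hx => ⟨by linarith [hx.1], hx.2⟩)
      hpβ hunn hC.le hgrowth (hMink _ ⟨by positivity, hs⟩).le).trans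
    (ofReal_dyadic_rpow_le (by positivity) hε.le hr0 (hrr₀.trans hr₀1.le) (by linarith) j)

/-- under the Minkowski-content smallness and the growth bound
`u ≤ C d(·,E)^{-β}`, one has `∫_{E_r} u^{p} ϑ ≤ C' ε r^{p⁺+1}` for all `r ∈ (0,r₀]`. -/
theorem stmt_6 {n : ℕ} (Ω E : Set (Fin n → ℝ)) (hΩo : IsOpen Ω)
    (hΩb : Bornology.IsBounded Ω) (hE : IsCompact E) (hEΩ : E ⊆ Ω)
    (hEnull : volume E = 0)
    (ϑ α β p u : (Fin n → ℝ) → ℝ)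
    (hϑpos : ∀ᵐ x ∂(volume.restrict Ω), 0 < ϑ x)
    (hαm : Measurable α) (hβm : Measurable β) (hpmeas : Measurable p)
    (hum : Measurable u) (hunn : ∀ x, 0 ≤ u x)
    (hα : ∀ x ∈ Ω, 0 ≤ α x ∧ α x ≤ n) (hβ : ∀ x ∈ Ω, 0 ≤ β x)
    (pm pp αp pβp : ℝ) (hpm1 : 1 < pm) (hpmpp : pm ≤ pp)
    (hpb : ∀ᵐ x ∂(volume.restrict Ω), pm ≤ p x ∧ p x ≤ pp)
    (hαp : ∀ᵐ x ∂(volume.restrict Ω), α x ≤ αp)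
    (hpβ : ∀ᵐ x ∂(volume.restrict Ω), p x * β x ≤ pβp)
    -- exponent condition: ess sup (pβ) ≤ n − ess sup α − p⁺ − 1
    (hexp : pβp ≤ n - αp - pp - 1)
    (r₀ ε : ℝ) (hr₀ : r₀ ∈ Set.Ioo (0:ℝ) 1) (hε : 0 < ε)
    (hcl : closure {x | infDist x E < r₀} ⊆ Ω)
    (hMink : ∀ r ∈ Set.Ioc (0:ℝ) r₀,
      ∫⁻ x in {x | infDist x E < r}, ENNReal.ofReal (r ^ (α x - n) * ϑ x)
        < ENNReal.ofReal ε)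
    (C : ℝ) (hC : 0 < C)
    (hgrowth : ∀ᵐ x ∂(volume.restrict (Ω \ E)), u x ≤ C * infDist x E ^ (-(β x))) :
    ∃ C' > (0:ℝ), ∀ r ∈ Set.Ioc (0:ℝ) r₀,
      ∫⁻ x in {x | infDist x E < r}, ENNReal.ofReal (u x ^ p x * ϑ x)
        ≤ ENNReal.ofReal (C' * ε * r ^ (pp + 1)) :=
  stmt_6_general Ω E hΩb hE hEnull ϑ α β p u hϑpos hunn hα hβ pm pp αp pβp hpm1 hpmpp hpb hαp hpβ
    hexp r₀ ε hr₀ hε hcl hMink C hC hgrowth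
end

section
/- Let Ω ⊆ ℝⁿ be open, ϑ ∈ L¹_loc(Ω) a positive weight, τ : Ω → [0,n] measurable, and suppose there is a locally bounded function σ : Ω × Ω → (0,∞) such that ∫_{Q(y,ℓ)} ℓ^{−τ(x)} ϑ(x) dx ≤ σ(y,z) ∫_{Q(z,ℓ)} ℓ^{−τ(x)} ϑ(x) dx for all pairs of adjacent dyadic cubes Q(y,ℓ), Q(z,ℓ) ⊆ Ω of equal side length ℓ. Then for every compact K ⊆ Ω there is a constant C = C(n,σ,K) such that ∫_{(3/2)Q(y,ℓ)} ℓ^{−τ} dϑ ≤ C ∫_{Q(z,ℓ)} ℓ^{−τ} dϑ whenever y,z ∈ K, ℓ√n < d(K,∂Ω), and either y = z or Q(y,ℓ) and Q(z,ℓ) are adjacent dyadic cubes contained in Ω. -/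
open MeasureTheory Set Metric

/-- The closed axis-parallel cube of center `c` and side length `ℓ`. -/
def cube {n : ℕ} (c : Fin n → ℝ) (ℓ : ℝ) : Set (Fin n → ℝ) :=
  {y | ∀ i, |c i - y i| ≤ ℓ / 2}

/-- `cube c ℓ` is a dyadic cube: `ℓ = 2^{-k}` and the center has coordinates
`(mᵢ + 1/2)·2^{-k}` for integers `mᵢ`. -/
def IsDyadicCube {n : ℕ} (c : Fin n → ℝ) (ℓ : ℝ) : Prop :=
  ∃ (k : ℤ) (m : Fin n → ℤ), ℓ = 2 ^ (-k) ∧ ∀ i, c i = ((m i : ℝ) + 1 / 2) * ℓ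

/-- Two distinct cubes of equal side length `ℓ` are adjacent if their closures intersect. -/
def AdjacentCubes {n : ℕ} (y z : Fin n → ℝ) (ℓ : ℝ) : Prop :=
  y ≠ z ∧ (cube y ℓ ∩ cube z ℓ).Nonempty

/-!
`(3/2) Q(y, ℓ)` is covered by the `4ⁿ` dyadic cubes of side `ℓ / 2` whose indices are within one
step of those of the `2ⁿ` children of `Q(y, ℓ)`, so each of them is equal or adjacent to a child
(clamp its index coordinatewise). The comparison hypothesis at scale `ℓ / 2` moves the mass of each
such cube to a child at the price `σ ≤ M`, and passing between the weights `(ℓ/2)^{-τ}` and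
`ℓ^{-τ}` costs at most `2^τ ≤ 2ⁿ`; one more comparison at scale `ℓ` goes from `Q(y, ℓ)` to
`Q(z, ℓ)`. All centers involved lie in a fixed compact thickening of `K` inside `Ω`, where `σ` is
bounded. Half-scale cubes are used, rather than the `3ⁿ - 1` neighbours of `Q(y, ℓ)` of side `ℓ`,
because they stay in the sup-ball of radius `ℓ ≤ ℓ√n` around `y`, which lies in `Ω`; the neighbours
reach out to `3ℓ/2`, which can leave `Ω` when `n ≤ 2`.
-/

open scoped ENNReal Topology

lemma IsCompact.bddAbove_image_of_locallyBddAbove {X : Type*} [TopologicalSpace X]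
    {f : X → ℝ} {K S : Set X} (hK : IsCompact K) (hKS : K ⊆ S)
    (hf : ∀ w ∈ S, ∃ U ∈ 𝓝 w, ∃ M : ℝ, ∀ q ∈ U, f q ≤ M) : BddAbove (f '' K) := by
  refine hK.induction_on (by simp) (fun s t hst ht => ht.mono (image_mono hst))
    (fun s t hs ht => by rw [image_union]; exact hs.union ht) fun w hw => ?_
  obtain ⟨U, hU, M, hM⟩ := hf w (hKS hw)
  exact ⟨U, mem_nhdsWithin_of_mem_nhds hU, M, forall_mem_image.2 hM⟩

section NormedSpace

variable {E : Type*} [NormedAddCommGroup E] [NormedSpace ℝ E] {Ω K : Set E}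

lemma ball_infDist_frontier_subset (hΩ : IsOpen Ω) {x : E} (hx : x ∈ Ω) :
    ball x (infDist x (frontier Ω)) ⊆ Ω := by
  rcases le_or_gt (infDist x (frontier Ω)) 0 with hρ | hρ
  · simp [ball_eq_empty.2 hρ]
  refine (convex_ball x _).isPreconnected.subset_of_closure_inter_subset hΩ
    ⟨x, mem_ball_self hρ, hx⟩ fun w ⟨hwc, hw⟩ => ?_
  by_contra hwΩ
  have hwf : w ∈ frontier Ω := hΩ.frontier_eq ▸ ⟨hwc, hwΩ⟩
  exact (mem_ball'.1 hw).not_ge (infDist_le_dist_of_mem hwf)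

lemma IsCompact.exists_isCompact_cthickening_subset [ProperSpace E] (hΩ : IsOpen Ω)
    (hK : IsCompact K) (hKΩ : K ⊆ Ω) {θ : ℝ} (hθ₀ : 0 ≤ θ) (hθ₁ : θ < 1) :
    ∃ L, IsCompact L ∧ L ⊆ Ω ∧
      ∀ δ, (∀ x ∈ K, δ < infDist x (frontier Ω)) → cthickening (θ * δ) K ⊆ L := by
  rcases K.eq_empty_or_nonempty with rfl | hKne
  · exact ⟨∅, isCompact_empty, empty_subset _, fun δ _ => by rw [cthickening_empty]⟩
  obtain ⟨x₀, hx₀, hmin⟩ :=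
    hK.exists_isMinOn hKne (continuous_infDist_pt (frontier Ω)).continuousOn
  set r := infDist x₀ (frontier Ω)
  refine ⟨cthickening (θ * r) K, hK.cthickening, ?_, fun δ hδ =>
    cthickening_mono (mul_le_mul_of_nonneg_left (hδ x₀ hx₀).le hθ₀) K⟩
  rcases le_or_gt (θ * r) 0 with hr | hr
  · rw [cthickening_of_nonpos hr, hK.isClosed.closure_eq]
    exact hKΩ
  rw [hK.cthickening_eq_biUnion_closedBall hr.le]
  refine iUnion₂_subset fun x hx =>
    (closedBall_subset_ball ?_).trans (ball_infDist_frontier_subset hΩ (hKΩ hx))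
  have hrx : r ≤ infDist x (frontier Ω) := hmin hx
  nlinarith

end NormedSpace

lemma ENNReal.ofReal_mul_le_ofReal_mul_right {a b : ℝ} (ha : 0 ≤ a) (hab : a ≤ b) (t : ℝ) :
    ENNReal.ofReal (a * t) ≤ ENNReal.ofReal (b * t) := by
  rcases le_or_gt 0 t with ht | ht
  · exact ENNReal.ofReal_le_ofReal (mul_le_mul_of_nonneg_right hab ht)
  · rw [ENNReal.ofReal_of_nonpos (mul_nonpos_of_nonneg_of_nonpos ha ht.le)]
    exact zero_le

lemma MeasureTheory.lintegral_biUnion_finset_le {α β : Type*} [MeasurableSpace α] {μ : Measure α}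
    (s : Finset β) (t : β → Set α) (f : α → ℝ≥0∞) :
    ∫⁻ a in ⋃ b ∈ s, t b, f a ∂μ ≤ ∑ b ∈ s, ∫⁻ a in t b, f a ∂μ := by
  rw [← Finset.tsum_subtype, ← lintegral_sum_measure]
  exact lintegral_mono' (Measure.restrict_biUnion_le s.countable_toSet) le_rfl

section Cubes

variable {n : ℕ}

lemma cube_fin_zero (c : Fin 0 → ℝ) (ℓ : ℝ) : cube c ℓ = univ :=
  eq_univ_of_forall fun _ i => i.elim0

lemma cube_eq_closedBall (c : Fin n → ℝ) {ℓ : ℝ} (hℓ : 0 ≤ ℓ) :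
    cube c ℓ = closedBall c (ℓ / 2) := by
  ext q
  simp only [cube, mem_ofPred_eq, mem_closedBall, dist_pi_le_iff (by positivity : 0 ≤ ℓ / 2),
    Real.dist_eq, abs_sub_comm]

lemma measurableSet_cube (c : Fin n → ℝ) (ℓ : ℝ) : MeasurableSet (cube c ℓ) := by
  simp only [cube, ofPred_forall]
  exact MeasurableSet.iInter fun i =>
    measurableSet_le ((measurable_const.sub (measurable_pi_apply i)).abs) measurable_const

lemma cube_subset_cube {c c' : Fin n → ℝ} {s ℓ : ℝ} (hs : 0 ≤ s) (h : s / 2 + dist c c' ≤ ℓ / 2) :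
    cube c s ⊆ cube c' ℓ := by
  have hℓ : 0 ≤ ℓ := by linarith [dist_nonneg (x := c) (y := c')]
  rw [cube_eq_closedBall c hs, cube_eq_closedBall c' hℓ]
  exact closedBall_subset_closedBall' h

noncomputable def dyadicCenter (s : ℝ) (m : Fin n → ℤ) : Fin n → ℝ :=
  fun i => ((m i : ℝ) + 1 / 2) * s

lemma IsDyadicCube.pos {c : Fin n → ℝ} {ℓ : ℝ} (h : IsDyadicCube c ℓ) : 0 < ℓ := by
  obtain ⟨k, -, rfl, -⟩ := h
  positivity

lemma IsDyadicCube.half_dyadicCenter {c : Fin n → ℝ} {ℓ : ℝ} (h : IsDyadicCube c ℓ)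
    (m : Fin n → ℤ) : IsDyadicCube (dyadicCenter (ℓ / 2) m) (ℓ / 2) := by
  obtain ⟨k, -, rfl, -⟩ := h
  refine ⟨k + 1, m, ?_, fun _ => rfl⟩
  rw [neg_add, zpow_add₀ two_ne_zero, zpow_neg_one, div_eq_mul_inv]

lemma adjacentCubes_dyadicCenter {s : ℝ} (hs : 0 < s) {a b : Fin n → ℤ} (hab : a ≠ b)
    (h : ∀ i, |a i - b i| ≤ 1) : AdjacentCubes (dyadicCenter s a) (dyadicCenter s b) s := by
  refine ⟨fun heq => hab (funext fun i => ?_), ?_⟩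
  · have := congrFun heq i
    simp only [dyadicCenter, mul_left_inj' hs.ne', add_left_inj, Int.cast_inj] at this
    exact this
  -- the coordinatewise midpoint of the two centers lies in both cubes
  refine ⟨fun i => (((a i + b i : ℤ) : ℝ) / 2 + 1 / 2) * s, fun i => ?_, fun i => ?_⟩ <;>
  · have hi : -1 ≤ ((a i - b i : ℤ) : ℝ) ∧ ((a i - b i : ℤ) : ℝ) ≤ 1 := by
      exact_mod_cast abs_le.1 (h i)
    push_cast at hi ⊢
    simp only [dyadicCenter]
    rw [abs_le]
    constructor <;> nlinarith

lemma mem_cube_dyadicCenter_floor {s : ℝ} (hs : 0 < s) (q : Fin n → ℝ) :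
    q ∈ cube (dyadicCenter s fun i => ⌊q i / s⌋) s := fun i => by
  have hlo : (⌊q i / s⌋ : ℝ) * s ≤ q i := (le_div_iff₀ hs).1 (Int.floor_le _)
  have hhi : q i < (⌊q i / s⌋ + 1) * s := (div_lt_iff₀ hs).1 (Int.lt_floor_add_one _)
  simp only [dyadicCenter]
  rw [abs_le]
  constructor <;> linarith

lemma dist_dyadicCenter_half_le {ℓ : ℝ} (hℓ : 0 ≤ ℓ) {m idx : Fin n → ℤ} (a : ℕ)
    (h : ∀ i, 2 * m i - a ≤ idx i ∧ idx i ≤ 2 * m i + 1 + a) :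
    dist (dyadicCenter (ℓ / 2) idx) (dyadicCenter ℓ m) ≤ (2 * a + 1) * ℓ / 4 := by
  refine (dist_pi_le_iff (by positivity)).2 fun i => ?_
  have hlo : (2 * m i - a : ℝ) ≤ idx i := by exact_mod_cast (h i).1
  have hhi : (idx i : ℝ) ≤ 2 * m i + 1 + a := by exact_mod_cast (h i).2
  rw [Real.dist_eq, abs_le]
  simp only [dyadicCenter]
  constructor <;> nlinarith

/-- Indices of the `4ⁿ` cubes of side `ℓ / 2` covering `(3/2) Q(dyadicCenter ℓ m, ℓ)`. -/
noncomputable def halfScaleNeighbours (m : Fin n → ℤ) : Finset (Fin n → ℤ) :=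
  Finset.Icc (fun i => 2 * m i - 1) (fun i => 2 * m i + 2)

lemma card_halfScaleNeighbours (m : Fin n → ℤ) : (halfScaleNeighbours m).card = 4 ^ n := by
  simp only [halfScaleNeighbours, Pi.card_Icc, Int.card_Icc]
  rw [Finset.prod_congr rfl fun i _ => (by omega : (2 * m i + 2 + 1 - (2 * m i - 1)).toNat = 4),
    Finset.prod_const, Finset.card_univ, Fintype.card_fin]

lemma cube_three_halves_subset_biUnion {ℓ : ℝ} (hℓ : 0 < ℓ) (m : Fin n → ℤ) :
    cube (dyadicCenter ℓ m) (3 * ℓ / 2) ⊆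
      ⋃ idx ∈ halfScaleNeighbours m, cube (dyadicCenter (ℓ / 2) idx) (ℓ / 2) := by
  intro q hq
  refine mem_biUnion (Finset.mem_coe.2 <| Finset.mem_Icc.2 ⟨fun i => ?_, fun i => ?_⟩)
    (mem_cube_dyadicCenter_floor (half_pos hℓ) q)
  all_goals
    have hqi := abs_le.1 (hq i)
    simp only [dyadicCenter] at hqi
  · rw [Int.le_floor, le_div_iff₀ (half_pos hℓ)]
    push_cast
    nlinarith
  · rw [Int.floor_le_iff, div_lt_iff₀ (half_pos hℓ)]
    push_cast
    nlinarith

lemma cube_two_mul_subset {Ω : Set (Fin n → ℝ)} (hΩ : IsOpen Ω) {y : Fin n → ℝ} (hy : y ∈ Ω)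
    {ℓ : ℝ} (hℓ : 0 ≤ ℓ) (hℓy : ℓ < infDist y (frontier Ω)) : cube y (2 * ℓ) ⊆ Ω := by
  rw [cube_eq_closedBall y (by positivity), mul_div_cancel_left₀ ℓ two_ne_zero]
  exact (closedBall_subset_ball hℓy).trans (ball_infDist_frontier_subset hΩ hy)

end Cubes

section WeightedMass

variable {α : Type*} [MeasureSpace α] {τ ϑ : α → ℝ} {S T : Set α}

/-- The paper's `∫_S ℓ^{-τ} dϑ`, with `dϑ = ϑ dx`. -/
noncomputable def weightedMass (τ ϑ : α → ℝ) (ℓ : ℝ) (S : Set α) : ℝ≥0∞ :=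
  ∫⁻ x in S, ENNReal.ofReal (ℓ ^ (-(τ x)) * ϑ x)

lemma weightedMass_mono_set (ℓ : ℝ) (h : S ⊆ T) : weightedMass τ ϑ ℓ S ≤ weightedMass τ ϑ ℓ T :=
  lintegral_mono_set h

lemma weightedMass_le_of_le_scale (hS : MeasurableSet S) {s ℓ : ℝ} (hs : 0 < s) (hsℓ : s ≤ ℓ)
    (hτ : ∀ x ∈ S, 0 ≤ τ x) : weightedMass τ ϑ ℓ S ≤ weightedMass τ ϑ s S :=
  setLIntegral_mono' hS fun x hx => ENNReal.ofReal_mul_le_ofReal_mul_right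
    (Real.rpow_nonneg (hs.le.trans hsℓ) _)
    (Real.rpow_le_rpow_of_nonpos hs hsℓ (neg_nonpos.2 (hτ x hx))) _

lemma weightedMass_div_le (hS : MeasurableSet S) {ℓ t : ℝ} (hℓ : 0 ≤ ℓ) (ht : 1 ≤ t) {N : ℕ}
    (hτ : ∀ x ∈ S, τ x ≤ N) :
    weightedMass τ ϑ (ℓ / t) S ≤ ENNReal.ofReal (t ^ N) * weightedMass τ ϑ ℓ S := by
  rw [weightedMass, weightedMass, ← lintegral_const_mul' _ _ ENNReal.ofReal_ne_top]
  refine setLIntegral_mono' hS fun x hx => ?_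
  rw [← ENNReal.ofReal_mul (by positivity), ← mul_assoc]
  refine ENNReal.ofReal_mul_le_ofReal_mul_right (by positivity) ?_ _
  calc (ℓ / t) ^ (-τ x) = t ^ τ x * ℓ ^ (-τ x) := by
        rw [Real.div_rpow hℓ (by linarith), Real.rpow_neg (by linarith : (0 : ℝ) ≤ t) (τ x),
          div_inv_eq_mul, mul_comm]
    _ ≤ t ^ N * ℓ ^ (-τ x) := by
        rw [← Real.rpow_natCast]
        gcongr
        exact hτ x hx

end WeightedMass

section Doubling

variable {n : ℕ} {τ ϑ : (Fin n → ℝ) → ℝ} {y : Fin n → ℝ} {ℓ M : ℝ}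

def HalfScaleComparable (τ ϑ : (Fin n → ℝ) → ℝ) (y : Fin n → ℝ) (ℓ M : ℝ) : Prop :=
  ∀ c c' : Fin n → ℝ, dist c y ≤ 3 / 4 * ℓ → dist c' y ≤ 3 / 4 * ℓ →
    IsDyadicCube c (ℓ / 2) → IsDyadicCube c' (ℓ / 2) → AdjacentCubes c c' (ℓ / 2) →
    weightedMass τ ϑ (ℓ / 2) (cube c (ℓ / 2)) ≤
      ENNReal.ofReal M * weightedMass τ ϑ (ℓ / 2) (cube c' (ℓ / 2))

lemma weightedMass_halfScaleNeighbour_le {m idx : Fin n → ℤ}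
    (hy : IsDyadicCube (dyadicCenter ℓ m) ℓ) (hidx : idx ∈ halfScaleNeighbours m) (hM : 1 ≤ M)
    (hτ : ∀ x ∈ cube (dyadicCenter ℓ m) (2 * ℓ), 0 ≤ τ x ∧ τ x ≤ n)
    (hcomp : HalfScaleComparable τ ϑ (dyadicCenter ℓ m) ℓ M) :
    weightedMass τ ϑ ℓ (cube (dyadicCenter (ℓ / 2) idx) (ℓ / 2)) ≤
      ENNReal.ofReal (2 ^ n * M) * weightedMass τ ϑ ℓ (cube (dyadicCenter ℓ m) ℓ) := by
  have hℓ := hy.pos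
  simp only [halfScaleNeighbours, Finset.mem_Icc, Pi.le_def] at hidx
  obtain ⟨hlo, hhi⟩ := hidx
  obtain ⟨idx', hchild, hclose⟩ : ∃ idx' : Fin n → ℤ,
      (∀ i, 2 * m i ≤ idx' i ∧ idx' i ≤ 2 * m i + 1) ∧ ∀ i, |idx i - idx' i| ≤ 1 :=
    ⟨fun i => max (2 * m i) (min (idx i) (2 * m i + 1)), fun i => by dsimp only; omega,
      fun i => by have := hlo i; have := hhi i; dsimp only; rw [abs_le]; omega⟩
  set y := dyadicCenter ℓ m
  set c := dyadicCenter (ℓ / 2) idx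
  set c' := dyadicCenter (ℓ / 2) idx'
  have hc : dist c y ≤ 3 / 4 * ℓ := by
    have := dist_dyadicCenter_half_le (m := m) hℓ.le 1 fun i => ⟨by have := hlo i; push_cast; omega,
      by have := hhi i; push_cast; omega⟩
    linarith
  have hc' : dist c' y ≤ 1 / 4 * ℓ := by
    have := dist_dyadicCenter_half_le (m := m) (idx := idx') hℓ.le 0 fun i => by
      have := hchild i; push_cast; omega
    linarith
  have hQ : cube c (ℓ / 2) ⊆ cube y (2 * ℓ) := cube_subset_cube (by positivity) (by linarith)
  have hQ' : cube c' (ℓ / 2) ⊆ cube y ℓ := cube_subset_cube (by positivity) (by linarith)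
  have hyy : cube y ℓ ⊆ cube y (2 * ℓ) := cube_subset_cube hℓ.le (by simp; linarith)
  have hstep : weightedMass τ ϑ (ℓ / 2) (cube c (ℓ / 2)) ≤
      ENNReal.ofReal M * weightedMass τ ϑ (ℓ / 2) (cube c' (ℓ / 2)) := by
    by_cases h : idx = idx'
    · simp only [c, c', h]
      exact le_mul_of_one_le_left' (ENNReal.one_le_ofReal.2 hM)
    · exact hcomp c c' hc (by linarith) (hy.half_dyadicCenter _) (hy.half_dyadicCenter _)
        (adjacentCubes_dyadicCenter (by positivity) h hclose)
  calc weightedMass τ ϑ ℓ (cube c (ℓ / 2))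
      ≤ weightedMass τ ϑ (ℓ / 2) (cube c (ℓ / 2)) :=
        weightedMass_le_of_le_scale (measurableSet_cube _ _) (by positivity) (by linarith)
          fun x hx => (hτ x (hQ hx)).1
    _ ≤ ENNReal.ofReal M * weightedMass τ ϑ (ℓ / 2) (cube c' (ℓ / 2)) := hstep
    _ ≤ ENNReal.ofReal M * (ENNReal.ofReal (2 ^ n) * weightedMass τ ϑ ℓ (cube c' (ℓ / 2))) := by
        gcongr
        exact weightedMass_div_le (measurableSet_cube _ _) hℓ.le one_le_two
          fun x hx => (hτ x (hyy (hQ' hx))).2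
    _ ≤ ENNReal.ofReal M * (ENNReal.ofReal (2 ^ n) * weightedMass τ ϑ ℓ (cube y ℓ)) := by
        gcongr
        exact weightedMass_mono_set ℓ hQ'
    _ = ENNReal.ofReal (2 ^ n * M) * weightedMass τ ϑ ℓ (cube y ℓ) := by
        rw [ENNReal.ofReal_mul (by positivity), mul_left_comm, mul_assoc]

lemma weightedMass_cube_three_halves_le (hy : IsDyadicCube y ℓ) (hM : 1 ≤ M)
    (hτ : ∀ x ∈ cube y (2 * ℓ), 0 ≤ τ x ∧ τ x ≤ n) (hcomp : HalfScaleComparable τ ϑ y ℓ M) :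
    weightedMass τ ϑ ℓ (cube y (3 * ℓ / 2)) ≤
      ENNReal.ofReal (4 ^ n * 2 ^ n * M) * weightedMass τ ϑ ℓ (cube y ℓ) := by
  have hℓ := hy.pos
  obtain ⟨-, m, -, hym⟩ := id hy
  obtain rfl : y = dyadicCenter ℓ m := funext hym
  calc weightedMass τ ϑ ℓ (cube (dyadicCenter ℓ m) (3 * ℓ / 2))
      ≤ ∑ idx ∈ halfScaleNeighbours m,
          weightedMass τ ϑ ℓ (cube (dyadicCenter (ℓ / 2) idx) (ℓ / 2)) :=
        (weightedMass_mono_set ℓ (cube_three_halves_subset_biUnion hℓ m)).trans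
          (lintegral_biUnion_finset_le _ _ _)
    _ ≤ ∑ _idx ∈ halfScaleNeighbours m,
          ENNReal.ofReal (2 ^ n * M) * weightedMass τ ϑ ℓ (cube (dyadicCenter ℓ m) ℓ) :=
        Finset.sum_le_sum fun _ hidx => weightedMass_halfScaleNeighbour_le hy hidx hM hτ hcomp
    _ = ENNReal.ofReal (4 ^ n * 2 ^ n * M) * weightedMass τ ϑ ℓ (cube (dyadicCenter ℓ m) ℓ) := by
        rw [Finset.sum_const, card_halfScaleNeighbours, nsmul_eq_mul, mul_assoc,
          ENNReal.ofReal_mul (by positivity), ENNReal.ofReal_pow (by norm_num)]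
        norm_num
        ring

end Doubling

theorem stmt_8_general {n : ℕ} (Ω : Set (Fin n → ℝ)) (hΩo : IsOpen Ω)
    (ϑ τ : (Fin n → ℝ) → ℝ)
    (hτ : ∀ x ∈ Ω, 0 ≤ τ x ∧ τ x ≤ n)
    (σ : (Fin n → ℝ) × (Fin n → ℝ) → ℝ)
    (hσloc : ∀ w ∈ Ω ×ˢ Ω, ∃ U ∈ nhds w, ∃ M : ℝ, ∀ q ∈ U, σ q ≤ M)
    (hcomp : ∀ (y z : Fin n → ℝ) (ℓ : ℝ), IsDyadicCube y ℓ → IsDyadicCube z ℓ →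
      AdjacentCubes y z ℓ → cube y ℓ ⊆ Ω → cube z ℓ ⊆ Ω →
      (∫⁻ x in cube y ℓ, ENNReal.ofReal (ℓ ^ (-(τ x)) * ϑ x))
        ≤ ENNReal.ofReal (σ (y, z)) * ∫⁻ x in cube z ℓ, ENNReal.ofReal (ℓ ^ (-(τ x)) * ϑ x))
    (K : Set (Fin n → ℝ)) (hK : IsCompact K) (hKΩ : K ⊆ Ω) :
    ∃ C > (0:ℝ), ∀ (y z : Fin n → ℝ) (ℓ : ℝ), 0 < ℓ →
      y ∈ K → z ∈ K → (∀ x ∈ K, ℓ * Real.sqrt n < infDist x (frontier Ω)) →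
      ((y = z ∧ IsDyadicCube y ℓ ∧ cube y ℓ ⊆ Ω) ∨
        (IsDyadicCube y ℓ ∧ IsDyadicCube z ℓ ∧ AdjacentCubes y z ℓ ∧
          cube y ℓ ⊆ Ω ∧ cube z ℓ ⊆ Ω)) →
      (∫⁻ x in cube y (3 * ℓ / 2), ENNReal.ofReal (ℓ ^ (-(τ x)) * ϑ x))
        ≤ ENNReal.ofReal C * ∫⁻ x in cube z ℓ, ENNReal.ofReal (ℓ ^ (-(τ x)) * ϑ x) := by
  rcases Nat.eq_zero_or_pos n with rfl | hn
  · exact ⟨1, one_pos, fun y z ℓ _ _ _ _ _ => by simp [cube_fin_zero]⟩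
  obtain ⟨L, hLc, hLΩ, hKL⟩ :=
    hK.exists_isCompact_cthickening_subset hΩo hKΩ (θ := 3 / 4) (by norm_num) (by norm_num)
  obtain ⟨M₀, hM₀⟩ := (hLc.prod hLc).bddAbove_image_of_locallyBddAbove (prod_mono hLΩ hLΩ) hσloc
  set M := max M₀ 1
  have hcompL : ∀ c c' s, c ∈ L → c' ∈ L → IsDyadicCube c s → IsDyadicCube c' s →
      AdjacentCubes c c' s → cube c s ⊆ Ω → cube c' s ⊆ Ω →
      weightedMass τ ϑ s (cube c s) ≤ ENNReal.ofReal M * weightedMass τ ϑ s (cube c' s) :=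
    fun c c' s hc hc' hcd hc'd hadj hcΩ hc'Ω => (hcomp c c' s hcd hc'd hadj hcΩ hc'Ω).trans <|
      mul_le_mul_left (ENNReal.ofReal_le_ofReal <|
        (hM₀ (mem_image_of_mem σ ⟨hc, hc'⟩)).trans (le_max_left _ _)) _
  refine ⟨4 ^ n * 2 ^ n * M * M, by positivity, fun y z ℓ hℓ hy hz hd hcase => ?_⟩
  have hℓK : ∀ x ∈ K, ℓ < infDist x (frontier Ω) := fun x hx =>
    (le_mul_of_one_le_right hℓ.le (Real.one_le_sqrt.2 (by exact_mod_cast hn))).trans_lt (hd x hx)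
  have hnear : ∀ c, dist c y ≤ 3 / 4 * ℓ → c ∈ L := fun c hc =>
    hKL ℓ hℓK (closedBall_subset_cthickening hy _ (mem_closedBall.2 hc))
  have hyΩ : cube y (2 * ℓ) ⊆ Ω := cube_two_mul_subset hΩo (hKΩ hy) hℓ.le (hℓK y hy)
  have hyd : IsDyadicCube y ℓ := by rcases hcase with ⟨-, h, -⟩ | ⟨h, -⟩ <;> exact h
  have hyz : weightedMass τ ϑ ℓ (cube y ℓ) ≤ ENNReal.ofReal M * weightedMass τ ϑ ℓ (cube z ℓ) := by
    rcases hcase with ⟨rfl, -, -⟩ | ⟨-, hzd, hadj, hyQ, hzQ⟩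
    · exact le_mul_of_one_le_left' (ENNReal.one_le_ofReal.2 (le_max_right _ _))
    · exact hcompL y z ℓ (hnear y (by simp; positivity))
        (hKL ℓ hℓK (self_subset_cthickening K hz)) hyd hzd hadj hyQ hzQ
  have hhalf : HalfScaleComparable τ ϑ y ℓ M := fun c c' hc hc' hcd hc'd hadj =>
    hcompL c c' _ (hnear c hc) (hnear c' hc') hcd hc'd hadj
      ((cube_subset_cube (by positivity) (by linarith)).trans hyΩ)
      ((cube_subset_cube (by positivity) (by linarith)).trans hyΩ)
  calc weightedMass τ ϑ ℓ (cube y (3 * ℓ / 2))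
      ≤ ENNReal.ofReal (4 ^ n * 2 ^ n * M) * weightedMass τ ϑ ℓ (cube y ℓ) :=
        weightedMass_cube_three_halves_le hyd (le_max_right _ _) (fun x hx => hτ x (hyΩ hx)) hhalf
    _ ≤ ENNReal.ofReal (4 ^ n * 2 ^ n * M) * (ENNReal.ofReal M * weightedMass τ ϑ ℓ (cube z ℓ)) :=
        by gcongr
    _ = ENNReal.ofReal (4 ^ n * 2 ^ n * M * M) * weightedMass τ ϑ ℓ (cube z ℓ) := by
        rw [ENNReal.ofReal_mul (p := 4 ^ n * 2 ^ n * M) (by positivity),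
          mul_assoc _ (ENNReal.ofReal M)]

/-- from the comparison of `∫ ℓ^{-τ} dϑ` over adjacent dyadic cubes
(with locally bounded constant `σ`) one gets, uniformly over a compact `K ⊆ Ω`,
`∫_{(3/2)Q(y,ℓ)} ℓ^{-τ} dϑ ≤ C ∫_{Q(z,ℓ)} ℓ^{-τ} dϑ` for `y = z` or adjacent cubes. -/
theorem stmt_8 {n : ℕ} (Ω : Set (Fin n → ℝ)) (hΩo : IsOpen Ω)
    (ϑ τ : (Fin n → ℝ) → ℝ)
    (hϑloc : LocallyIntegrableOn ϑ Ω) (hϑpos : ∀ᵐ x ∂(volume.restrict Ω), 0 < ϑ x)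
    (hτm : Measurable τ) (hτ : ∀ x ∈ Ω, 0 ≤ τ x ∧ τ x ≤ n)
    (σ : (Fin n → ℝ) × (Fin n → ℝ) → ℝ) (hσpos : ∀ w, 0 < σ w)
    (hσloc : ∀ w ∈ Ω ×ˢ Ω, ∃ U ∈ nhds w, ∃ M : ℝ, ∀ q ∈ U, σ q ≤ M)
    (hcomp : ∀ (y z : Fin n → ℝ) (ℓ : ℝ), IsDyadicCube y ℓ → IsDyadicCube z ℓ →
      AdjacentCubes y z ℓ → cube y ℓ ⊆ Ω → cube z ℓ ⊆ Ω →
      (∫⁻ x in cube y ℓ, ENNReal.ofReal (ℓ ^ (-(τ x)) * ϑ x))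
        ≤ ENNReal.ofReal (σ (y, z)) * ∫⁻ x in cube z ℓ, ENNReal.ofReal (ℓ ^ (-(τ x)) * ϑ x))
    (K : Set (Fin n → ℝ)) (hK : IsCompact K) (hKΩ : K ⊆ Ω) :
    ∃ C > (0:ℝ), ∀ (y z : Fin n → ℝ) (ℓ : ℝ), 0 < ℓ →
      y ∈ K → z ∈ K → (∀ x ∈ K, ℓ * Real.sqrt n < infDist x (frontier Ω)) →
      ((y = z ∧ IsDyadicCube y ℓ ∧ cube y ℓ ⊆ Ω) ∨
        (IsDyadicCube y ℓ ∧ IsDyadicCube z ℓ ∧ AdjacentCubes y z ℓ ∧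
          cube y ℓ ⊆ Ω ∧ cube z ℓ ⊆ Ω)) →
      (∫⁻ x in cube y (3 * ℓ / 2), ENNReal.ofReal (ℓ ^ (-(τ x)) * ϑ x))
        ≤ ENNReal.ofReal C * ∫⁻ x in cube z ℓ, ENNReal.ofReal (ℓ ^ (-(τ x)) * ϑ x) :=
  stmt_8_general Ω hΩo ϑ τ hτ σ hσloc hcomp K hK hKΩ
end

section
/- Let Ω ⊆ ℝⁿ be bounded open, E ⊆ Ω compact, ϑ ∈ L¹_loc(Ω) positive with ϑ^{−1/(p−1)} ∈ L¹_loc(Ω), and p measurable with 1 < p⁻ ≤ p⁺ < ∞. Suppose u : Ω → [0,∞] is measurable, u ∈ W^{1,p(·)}_loc(Ω∖E, ϑ), there exists r₀ ∈ (0,1) with closure(E_{r₀}) ⊆ Ω, ε > 0, and ∫_{E_r} u^{p} ϑ dx ≤ C₂ ε r^{p⁺+1} for all r ∈ (0,r₀]. Then for every φ ∈ C₀^∞(Ω) with |φ| ≤ 1 and any smooth cutoffs ζ_r with ζ_r = 1 on E_r, ζ_r = 0 outside E_{2r}, |ζ_r'| ≤ C₈/r, one has ∫_{Ω∖E} u (ζ_r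 ∘ d(·,E))_{x_i} φ dx → 0 as r → 0⁺ for each i = 1,…,n. -/
open MeasureTheory Set Metric Filter

lemma aux_young {uu ϑx px pm pp r : ℝ} (hu : 0 ≤ uu) (hϑ : 0 < ϑx)
    (hpm : 1 < pm) (h1 : pm ≤ px) (h2 : px ≤ pp) (hr0 : 0 < r) (hr1 : r < 1) :
    uu ≤ r ^ (-((1 - 1/(2*pp)) * pp)) * (uu ^ px * ϑx)
      + r ^ ((1 - 1/(2*pp)) * (pp/(pp-1))) * ϑx ^ (-(1/(px-1))) := by
  have hpx1 : 1 < px := lt_of_lt_of_le hpm h1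
  have hpp1 : 1 < pp := lt_of_lt_of_le hpx1 h2
  have hpx0 : (0:ℝ) < px := by linarith
  have hpxne : px ≠ 0 := ne_of_gt hpx0
  set β : ℝ := 1 - 1/(2*pp) with hβ
  have hβpos : 0 < β := by
    have : 1/(2*pp) < 1 := by
      rw [div_lt_one (by linarith)]; linarith
    simp only [hβ]; linarith
  set l : ℝ := r ^ (-β) with hl
  have hl1 : 1 ≤ l := Real.one_le_rpow_of_pos_of_le_one_of_nonpos hr0 hr1.le (by linarith)
  have hl0 : 0 < l := lt_of_lt_of_le one_pos hl1
  -- conjugate exponent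
  set q : ℝ := px / (px - 1) with hq
  have hconj : px.HolderConjugate q := Real.HolderConjugate.conjExponent hpx1
  have hq1 : 1 ≤ q := hconj.symm.lt.le
  set a : ℝ := l * (uu * ϑx ^ (1/px)) with ha
  set b : ℝ := ϑx ^ (-(1/px)) / l with hb
  have ha0 : 0 ≤ a := mul_nonneg hl0.le (mul_nonneg hu (Real.rpow_nonneg hϑ.le _))
  have hb0 : 0 ≤ b := div_nonneg (Real.rpow_nonneg hϑ.le _) hl0.le
  have hab : a * b = uu := by
    have key : ϑx ^ (1/px) * ϑx ^ (-(1/px)) = 1 := by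
      rw [← Real.rpow_add hϑ]; simp
    have : a * b = uu * (ϑx ^ (1/px) * ϑx ^ (-(1/px))) * (l / l) := by
      rw [ha, hb]; ring
    rw [this, key, div_self hl0.ne', mul_one, mul_one]
  have hyoung := Real.young_inequality_of_nonneg ha0 hb0 hconj
  rw [hab] at hyoung
  have h1' : a ^ px / px ≤ r ^ (-(β * pp)) * (uu ^ px * ϑx) := by
    have haexp : a ^ px = l ^ px * (uu ^ px * ϑx) := by
      rw [ha, Real.mul_rpow hl0.le (mul_nonneg hu (Real.rpow_nonneg hϑ.le _)),
        Real.mul_rpow hu (Real.rpow_nonneg hϑ.le _), ← Real.rpow_mul hϑ.le,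
        one_div, inv_mul_cancel₀ hpxne, Real.rpow_one]
    have hlpow : l ^ px ≤ r ^ (-(β * pp)) := by
      have : l ^ px ≤ l ^ pp := Real.rpow_le_rpow_of_exponent_le hl1 h2
      calc l ^ px ≤ l ^ pp := this
        _ = r ^ (-(β*pp)) := by
          rw [hl, ← Real.rpow_mul hr0.le]; ring_nf
    calc a ^ px / px ≤ a ^ px := div_le_self (Real.rpow_nonneg ha0 _) hpx1.le
      _ = l ^ px * (uu ^ px * ϑx) := haexp
      _ ≤ r ^ (-(β * pp)) * (uu ^ px * ϑx) :=
        mul_le_mul_of_nonneg_right hlpow (mul_nonneg (Real.rpow_nonneg hu _) hϑ.le)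
  have h2' : b ^ q / q ≤ r ^ (β * (pp/(pp-1))) * ϑx ^ (-(1/(px-1))) := by
    have hbexp : b ^ q = l ^ (-q) * ϑx ^ (-(1/(px-1))) := by
      have hpx1' : px - 1 ≠ 0 := by linarith
      rw [hb, div_eq_mul_inv, Real.mul_rpow (Real.rpow_nonneg hϑ.le _) (inv_nonneg.2 hl0.le),
        ← Real.rpow_mul hϑ.le, Real.inv_rpow hl0.le, ← Real.rpow_neg hl0.le]
      have hexp : -(1/px) * q = -(1/(px-1)) := by
        rw [hq]; field_simp
      rw [hexp]; ring
    have hQq : pp/(pp-1) ≤ q := by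
      rw [hq, div_le_div_iff₀ (by linarith) (by linarith)]
      nlinarith
    have hlpow : l ^ (-q) ≤ r ^ (β * (pp/(pp-1))) := by
      have : l ^ (-q) ≤ l ^ (-(pp/(pp-1))) :=
        Real.rpow_le_rpow_of_exponent_le hl1 (by linarith)
      calc l ^ (-q) ≤ l ^ (-(pp/(pp-1))) := this
        _ = r ^ (β * (pp/(pp-1))) := by
          rw [hl, ← Real.rpow_mul hr0.le]; ring_nf
    calc b ^ q / q ≤ b ^ q := div_le_self (Real.rpow_nonneg hb0 _) hq1
      _ = l ^ (-q) * ϑx ^ (-(1/(px-1))) := hbexp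
      _ ≤ r ^ (β * (pp/(pp-1))) * ϑx ^ (-(1/(px-1))) :=
        mul_le_mul_of_nonneg_right hlpow (Real.rpow_nonneg hϑ.le _)
  calc uu ≤ a ^ px / px + b ^ q / q := hyoung
    _ ≤ r ^ (-((1 - 1/(2*pp)) * pp)) * (uu ^ px * ϑx)
      + r ^ ((1 - 1/(2*pp)) * (pp/(pp-1))) * ϑx ^ (-(1/(px-1))) := by
        rw [← hβ]; exact add_le_add h1' h2'

/-- vanishing of the cutoff boundary terms: with the decay
`∫_{E_r} u^p ϑ ≤ C₂ ε r^{p⁺+1}` and cutoffs `ζ_r` (`=1` on `E_r`, `=0` off `E_{2r}`,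
`|ζ_r'| ≤ C₈/r`), one has `∫_{Ω∖E} u ∂ᵢ(ζ_r ∘ d(·,E)) φ dx → 0` as `r → 0⁺`. -/
theorem stmt_12 {n : ℕ} (Ω E : Set (Fin n → ℝ)) (hΩo : IsOpen Ω)
    (hΩb : Bornology.IsBounded Ω) (hE : IsCompact E) (hEΩ : E ⊆ Ω)
    (ϑ p u : (Fin n → ℝ) → ℝ)
    (hϑloc : LocallyIntegrableOn ϑ Ω)
    (hϑ'loc : LocallyIntegrableOn (fun x => ϑ x ^ (-(1 / (p x - 1)))) Ω)
    (hϑpos : ∀ᵐ x ∂(volume.restrict Ω), 0 < ϑ x)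
    (hpmeas : Measurable p)
    (pm pp : ℝ) (hpm1 : 1 < pm) (hpmpp : pm ≤ pp)
    (hpb : ∀ᵐ x ∂(volume.restrict Ω), pm ≤ p x ∧ p x ≤ pp)
    (hum : Measurable u) (hunn : ∀ x, 0 ≤ u x)
    (huloc : LocallyIntegrableOn u (Ω \ E))
    (r₀ ε C₂ : ℝ) (hr₀ : r₀ ∈ Set.Ioo (0:ℝ) 1) (hε : 0 < ε) (hC₂ : 0 < C₂)
    (hcl : closure {x | infDist x E < r₀} ⊆ Ω)
    (hdecay : ∀ r ∈ Set.Ioc (0:ℝ) r₀,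
      ∫⁻ x in {x | infDist x E < r}, ENNReal.ofReal (u x ^ p x * ϑ x)
        ≤ ENNReal.ofReal (C₂ * ε * r ^ (pp + 1)))
    (φ : (Fin n → ℝ) → ℝ) (hφs : ContDiff ℝ (⊤ : ℕ∞) φ) (hφc : HasCompactSupport φ)
    (hφΩ : tsupport φ ⊆ Ω) (hφ1 : ∀ x, |φ x| ≤ 1)
    (C₈ : ℝ) (hC₈ : 0 < C₈) (ζ : ℝ → ℝ → ℝ)
    (hζ : ∀ r ∈ Set.Ioo (0:ℝ) (r₀ / 2),
      ContDiff ℝ (⊤ : ℕ∞) (ζ r) ∧ (∀ t, |t| ≤ r → ζ r t = 1) ∧ (∀ t, 2 * r ≤ |t| → ζ r t = 0) ∧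
      (∀ t, 0 ≤ ζ r t ∧ ζ r t ≤ 1) ∧ (∀ t, |deriv (ζ r) t| ≤ C₈ / r)) :
    ∀ i : Fin n,
      Tendsto (fun r : ℝ =>
          ∫ x in Ω \ E,
            u x * (fderiv ℝ (fun y => ζ r (infDist y E)) x) (Pi.single i 1) * φ x)
        (nhdsWithin 0 (Set.Ioi 0)) (nhds 0) := by
  intro i
  obtain ⟨hr₀0, hr₀1⟩ := hr₀
  have hpp1 : 1 < pp := lt_of_lt_of_le hpm1 hpmpp
  have hppne : pp ≠ 0 := by positivity
  have hpp1ne : pp - 1 ≠ 0 := by linarith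
  set β : ℝ := 1 - 1/(2*pp) with hβdef
  set γ : ℝ := 1/(2*(pp-1)) with hγdef
  have hγpos : 0 < γ := by
    rw [hγdef]
    have hpos : 0 < pp - 1 := by linarith
    positivity
  -- the compact set C
  set C : Set (Fin n → ℝ) := closure {x | infDist x E < r₀} with hCdef
  have hCcomp : IsCompact C :=
    Metric.isCompact_of_isClosed_isBounded isClosed_closure (hΩb.subset hcl)
  have hCΩ : C ⊆ Ω := hcl
  set ϑ' : (Fin n → ℝ) → ℝ := fun x => ϑ x ^ (-(1 / (p x - 1))) with hϑ'def
  have hϑ'int : IntegrableOn ϑ' C volume := hϑ'loc.integrableOn_compact_subset hCΩ hCcomp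
  have hϑ'nnC : 0 ≤ᵐ[volume.restrict C] ϑ' := by
    filter_upwards [ae_restrict_of_ae_restrict_of_subset hCΩ hϑpos] with x hx
    exact Real.rpow_nonneg hx.le _
  set M : ℝ := ∫ x in C, ϑ' x with hMdef
  have hM0 : 0 ≤ M := integral_nonneg_of_ae hϑ'nnC
  have hMlin : ∫⁻ x in C, ENNReal.ofReal (ϑ' x) = ENNReal.ofReal M :=
    (ofReal_integral_eq_lintegral_ofReal hϑ'int hϑ'nnC).symm
  set A : ℝ := C₈ * (C₂ * ε * 3 ^ (pp+1)) with hAdef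
  set B : ℝ := C₈ * M with hBdef
  have key : ∀ r ∈ Set.Ioo (0:ℝ) (r₀/3),
      ‖∫ x in Ω \ E,
          u x * (fderiv ℝ (fun y => ζ r (infDist y E)) x) (Pi.single i 1) * φ x‖
        ≤ A * r ^ ((1:ℝ)/2) + B * r ^ γ := by
    intro r hrmem
    obtain ⟨hr, hr3⟩ := hrmem
    have hrne : r ≠ 0 := hr.ne'
    have hr1 : r < 1 := by nlinarith
    have hrhalf : r < r₀ / 2 := by nlinarith
    obtain ⟨hζsm, hζone, hζzero, hζrange, hζder⟩ := hζ r ⟨hr, hrhalf⟩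
    set f : (Fin n → ℝ) → ℝ := fun y => ζ r (infDist y E) with hfdef
    have hCr : 0 ≤ C₈ / r := by positivity
    -- Lipschitz bound on the gradient
    have hlipζ : LipschitzWith (Real.toNNReal (C₈/r)) (ζ r) := by
      apply lipschitzWith_of_nnnorm_deriv_le (hζsm.differentiable (by simp))
      intro t
      rw [← NNReal.coe_le_coe, coe_nnnorm, Real.coe_toNNReal _ hCr]
      simpa using hζder t
    have hlip : LipschitzWith (Real.toNNReal (C₈/r)) f := by
      have := hlipζ.comp (lipschitz_infDist_pt E)
      rw [mul_one] at this; exact this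
    have hfd : ∀ x, ‖fderiv ℝ f x‖ ≤ C₈ / r := by
      intro x
      have := norm_fderiv_le_of_lipschitz ℝ hlip (x₀ := x)
      rwa [Real.coe_toNNReal _ hCr] at this
    -- vanishing of the gradient off the annulus
    have hvan : ∀ x, infDist x E < r ∨ 2*r < infDist x E → fderiv ℝ f x = 0 := by
      intro x hx
      rcases hx with h | h
      · have hev : f =ᶠ[nhds x] (fun _ => (1:ℝ)) := by
          filter_upwards [(isOpen_lt (continuous_infDist_pt E) continuous_const).mem_nhds h]
            with y hy
          exact hζone _ (by rw [abs_of_nonneg infDist_nonneg]; exact le_of_lt hy)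
        rw [hev.fderiv_eq]; exact fderiv_const_apply 1
      · have hev : f =ᶠ[nhds x] (fun _ => (0:ℝ)) := by
          filter_upwards [(isOpen_lt continuous_const (continuous_infDist_pt E)).mem_nhds h]
            with y hy
          exact hζzero _ (by rw [abs_of_nonneg infDist_nonneg]; exact le_of_lt hy)
        rw [hev.fderiv_eq]; exact fderiv_const_apply 0
    -- the annulus K
    set K : Set (Fin n → ℝ) := {x | r ≤ infDist x E} ∩ {x | infDist x E ≤ 2*r} with hKdef
    have hKclosed : IsClosed K :=
      (isClosed_le continuous_const (continuous_infDist_pt E)).inter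
        (isClosed_le (continuous_infDist_pt E) continuous_const)
    have hKsubC : K ⊆ C := by
      intro x hx
      exact subset_closure (show infDist x E < r₀ by
        have h2 := hx.2; simp only [mem_setOf_eq] at h2; linarith)
    have hKsub3 : K ⊆ {x | infDist x E < 3*r} := by
      intro x hx
      have h2 := hx.2; simp only [mem_setOf_eq] at h2 ⊢; linarith
    have hKΩE : K ⊆ Ω \ E := by
      intro x hx
      refine ⟨hCΩ (hKsubC hx), fun hxE => ?_⟩
      have h0 : infDist x E = 0 := infDist_zero_of_mem hxE
      have h1 := hx.1; simp only [mem_setOf_eq, h0] at h1; linarith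
    have hKcomp : IsCompact K :=
      Metric.isCompact_of_isClosed_isBounded hKclosed
        ((hΩb.subset hCΩ).subset hKsubC)
    have hKmeas : MeasurableSet K := hKclosed.measurableSet
    have huK : IntegrableOn u K volume := huloc.integrableOn_compact_subset hKΩE hKcomp
    -- pointwise bound
    set h : (Fin n → ℝ) → ℝ := K.indicator (fun x => (C₈/r) * u x) with hhdef
    have hsingle : ‖(Pi.single i (1:ℝ) : Fin n → ℝ)‖ ≤ 1 := by
      rw [pi_norm_le_iff_of_nonneg zero_le_one]
      intro j
      rcases eq_or_ne j i with hji | hji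
      · subst hji; simp
      · simp [Pi.single_apply, hji]
    have hgh : ∀ x, ‖u x * (fderiv ℝ f x) (Pi.single i 1) * φ x‖ ≤ h x := by
      intro x
      by_cases hx : x ∈ K
      · rw [hhdef, indicator_of_mem hx]
        have hb1 : ‖(fderiv ℝ f x) (Pi.single i 1)‖ ≤ C₈ / r := by
          calc ‖(fderiv ℝ f x) (Pi.single i 1)‖
              ≤ ‖fderiv ℝ f x‖ * ‖(Pi.single i (1:ℝ) : Fin n → ℝ)‖ :=
                ContinuousLinearMap.le_opNorm _ _
            _ ≤ (C₈/r) * 1 := mul_le_mul (hfd x) hsingle (norm_nonneg _) hCr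
            _ = C₈/r := mul_one _
        calc ‖u x * (fderiv ℝ f x) (Pi.single i 1) * φ x‖
            = u x * ‖(fderiv ℝ f x) (Pi.single i 1)‖ * |φ x| := by
              simp only [norm_mul, Real.norm_eq_abs, abs_of_nonneg (hunn x)]
          _ ≤ u x * (C₈/r) * 1 := by
              apply mul_le_mul _ (hφ1 x) (abs_nonneg _) (mul_nonneg (hunn x) hCr)
              exact mul_le_mul_of_nonneg_left hb1 (hunn x)
          _ = (C₈/r) * u x := by ring
      · rw [hhdef, indicator_of_notMem hx]
        have hx' : infDist x E < r ∨ 2*r < infDist x E := by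
          rcases lt_or_ge (infDist x E) r with h' | h'
          · exact Or.inl h'
          · right
            by_contra hcon
            push_neg at hcon
            exact hx ⟨h', hcon⟩
        rw [hvan x hx']
        simp
    -- integrability of the dominating function
    have hhint : Integrable h (volume.restrict (Ω \ E)) := by
      have : Integrable h volume := by
        rw [hhdef]
        exact MeasureTheory.IntegrableOn.integrable_indicator (huK.const_mul (C₈/r)) hKmeas
      exact this.restrict
    -- the main bound
    have hbound : ‖∫ x in Ω \ E, u x * (fderiv ℝ f x) (Pi.single i 1) * φ x‖
        ≤ ∫ x in Ω \ E, h x :=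
      norm_integral_le_of_norm_le hhint (Eventually.of_forall hgh)
    have hIh : ∫ x in Ω \ E, h x = (C₈/r) * ∫ x in K, u x := by
      rw [hhdef, integral_indicator hKmeas, Measure.restrict_restrict hKmeas,
        inter_eq_self_of_subset_left hKΩE, integral_const_mul]
    -- the lintegral estimate on K
    have hϑae : AEMeasurable ϑ (volume.restrict K) :=
      (hϑloc.aestronglyMeasurable.mono_measure
        (Measure.restrict_mono (hKsubC.trans hCΩ) le_rfl)).aemeasurable
    have huKb : ∫ x in K, u x
        ≤ r ^ (-(β*pp)) * (C₂*ε*(3*r)^(pp+1)) + r ^ (β*(pp/(pp-1))) * M := by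
      have hRHS0 : 0 ≤ r ^ (-(β*pp)) * (C₂*ε*(3*r)^(pp+1)) + r ^ (β*(pp/(pp-1))) * M := by
        have h3r : (0:ℝ) < 3*r := by linarith
        apply add_nonneg
        · apply mul_nonneg (Real.rpow_nonneg hr.le _)
          positivity
        · exact mul_nonneg (Real.rpow_nonneg hr.le _) hM0
      rw [integral_eq_lintegral_of_nonneg_ae (Eventually.of_forall hunn)
        hum.aestronglyMeasurable]
      apply ENNReal.toReal_le_of_le_ofReal hRHS0
      have hae : ∀ᵐ x ∂(volume.restrict K), ENNReal.ofReal (u x) ≤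
          ENNReal.ofReal (r ^ (-(β*pp)) * (u x ^ p x * ϑ x)) +
          ENNReal.ofReal (r ^ (β*(pp/(pp-1))) * ϑ' x) := by
        filter_upwards [ae_restrict_of_ae_restrict_of_subset (hKsubC.trans hCΩ) hϑpos,
          ae_restrict_of_ae_restrict_of_subset (hKsubC.trans hCΩ) hpb] with x hx1 hx2
        have hy := aux_young (hunn x) hx1 hpm1 hx2.1 hx2.2 hr hr1
        rw [← hβdef] at hy
        calc ENNReal.ofReal (u x)
            ≤ ENNReal.ofReal (r ^ (-(β*pp)) * (u x ^ p x * ϑ x)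
                + r ^ (β*(pp/(pp-1))) * ϑ' x) := ENNReal.ofReal_le_ofReal hy
          _ ≤ _ := ENNReal.ofReal_add_le
      have hmeas1 : AEMeasurable
          (fun x => ENNReal.ofReal (r ^ (-(β*pp)) * (u x ^ p x * ϑ x)))
          (volume.restrict K) := by
        apply ENNReal.measurable_ofReal.comp_aemeasurable
        exact (((hum.pow hpmeas).aemeasurable.mul hϑae).const_mul _)
      calc ∫⁻ x in K, ENNReal.ofReal (u x)
          ≤ ∫⁻ x in K, (ENNReal.ofReal (r ^ (-(β*pp)) * (u x ^ p x * ϑ x)) +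
              ENNReal.ofReal (r ^ (β*(pp/(pp-1))) * ϑ' x)) := lintegral_mono_ae hae
        _ = (∫⁻ x in K, ENNReal.ofReal (r ^ (-(β*pp)) * (u x ^ p x * ϑ x))) +
            ∫⁻ x in K, ENNReal.ofReal (r ^ (β*(pp/(pp-1))) * ϑ' x) :=
            lintegral_add_left' hmeas1 _
        _ = ENNReal.ofReal (r ^ (-(β*pp))) *
              (∫⁻ x in K, ENNReal.ofReal (u x ^ p x * ϑ x)) +
            ENNReal.ofReal (r ^ (β*(pp/(pp-1)))) *
              ∫⁻ x in K, ENNReal.ofReal (ϑ' x) := by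
            rw [← lintegral_const_mul' _ _ ENNReal.ofReal_ne_top,
              ← lintegral_const_mul' _ _ ENNReal.ofReal_ne_top]
            congr 1
            · exact lintegral_congr fun x => by
                rw [← ENNReal.ofReal_mul (Real.rpow_nonneg hr.le _)]
            · exact lintegral_congr fun x => by
                rw [← ENNReal.ofReal_mul (Real.rpow_nonneg hr.le _)]
        _ ≤ ENNReal.ofReal (r ^ (-(β*pp))) * ENNReal.ofReal (C₂*ε*(3*r)^(pp+1)) +
            ENNReal.ofReal (r ^ (β*(pp/(pp-1)))) * ENNReal.ofReal M := by
            apply add_le_add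
            · apply mul_le_mul_right
              refine le_trans (lintegral_mono_set hKsub3) ?_
              exact hdecay (3*r) ⟨by linarith, by linarith⟩
            · apply mul_le_mul_right
              exact le_trans (lintegral_mono_set hKsubC) hMlin.le
        _ = ENNReal.ofReal (r ^ (-(β*pp)) * (C₂*ε*(3*r)^(pp+1)) +
              r ^ (β*(pp/(pp-1))) * M) := by
            rw [← ENNReal.ofReal_mul (Real.rpow_nonneg hr.le _),
              ← ENNReal.ofReal_mul (Real.rpow_nonneg hr.le _),
              ← ENNReal.ofReal_add]
            · apply mul_nonneg (Real.rpow_nonneg hr.le _)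
              have h3r : (0:ℝ) < 3*r := by linarith
              positivity
            · exact mul_nonneg (Real.rpow_nonneg hr.le _) hM0
    -- final algebra
    have hx1 : r ^ (-(β*pp)) * r ^ (pp+1) = r ^ ((1:ℝ)/2) * r := by
      rw [← Real.rpow_add hr]
      rw [show ((1:ℝ)/2) = (-(β*pp)+(pp+1)) - 1 by rw [hβdef]; field_simp; ring]
      rw [Real.rpow_sub hr, Real.rpow_one, div_mul_cancel₀ _ hrne]
    have hx2 : r ^ (β*(pp/(pp-1))) = r ^ γ * r := by
      rw [show β*(pp/(pp-1)) = γ + 1 by rw [hβdef, hγdef]; field_simp; ring]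
      rw [Real.rpow_add hr, Real.rpow_one]
    have hfin : (C₈/r) * (r ^ (-(β*pp)) * (C₂*ε*(3*r)^(pp+1)) + r ^ (β*(pp/(pp-1))) * M)
        = A * r ^ ((1:ℝ)/2) + B * r ^ γ := by
      rw [Real.mul_rpow (by norm_num : (0:ℝ) ≤ 3) hr.le, hx2]
      field_simp [hAdef, hBdef]
      linear_combination (C₈*(C₂*ε*3^(pp+1))) * hx1
    calc ‖∫ x in Ω \ E, u x * (fderiv ℝ f x) (Pi.single i 1) * φ x‖
        ≤ ∫ x in Ω \ E, h x := hbound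
      _ = (C₈/r) * ∫ x in K, u x := hIh
      _ ≤ (C₈/r) * (r ^ (-(β*pp)) * (C₂*ε*(3*r)^(pp+1)) + r ^ (β*(pp/(pp-1))) * M) :=
          mul_le_mul_of_nonneg_left huKb hCr
      _ = A * r ^ ((1:ℝ)/2) + B * r ^ γ := hfin
  -- conclude by squeezing
  have hrp : ∀ c : ℝ, 0 < c →
      Tendsto (fun r : ℝ => r ^ c) (nhdsWithin 0 (Set.Ioi 0)) (nhds 0) := by
    intro c hc
    have h0 : ((0:ℝ) ^ c) = 0 := Real.zero_rpow hc.ne'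
    have := (Real.continuousAt_rpow_const 0 c (Or.inr hc.le)).tendsto
    rw [h0] at this
    exact this.mono_left nhdsWithin_le_nhds
  have hgt : Tendsto (fun r : ℝ => A * r ^ ((1:ℝ)/2) + B * r ^ γ)
      (nhdsWithin 0 (Set.Ioi 0)) (nhds 0) := by
    have h1 := (hrp ((1:ℝ)/2) (by norm_num)).const_mul A
    have h2 := (hrp γ hγpos).const_mul B
    have := h1.add h2
    simpa using this
  refine squeeze_zero_norm' ?_ hgt
  filter_upwards [Ioo_mem_nhdsGT_of_mem (show (0:ℝ) ∈ Set.Ico (0:ℝ) (r₀/3) from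
    ⟨le_refl 0, by linarith⟩)] with r hr
  exact key r hr
end
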